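/- The automorphism group of the alternating group A₅ is isomorphic to the symmetric group S₅. -/
import Mathlib

open Equiv Equiv.Perm Subgroup

set_option maxRecDepth 100000
set_option maxHeartbeats 2000000

private def s5 : Equiv.Perm (Fin 5) := c[0, 1, 2, 3, 4]
private def t5 : Equiv.Perm (Fin 5) := c[1, 2] * c[3, 4]
private def u5 : Equiv.Perm (Fin 5) := c[1, 3] * c[2, 4]

private lemma hs5A : s5 ∈ alternatingGroup (Fin 5) := by
  rw [Equiv.Perm.mem_alternatingGroup]; decide

private lemma ht5A : t5 ∈ alternatingGroup (Fin 5) := by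
  rw [Equiv.Perm.mem_alternatingGroup]; decide

/-- The Klein four subgroup generated by `t5` and `u5`. -/
private def K4 : Subgroup (Equiv.Perm (Fin 5)) where
  carrier := ↑({1, t5, u5, t5 * u5} : Finset (Equiv.Perm (Fin 5)))
  one_mem' := by decide
  mul_mem' := by
    intro a b ha hb
    revert ha hb
    revert a b
    decide
  inv_mem' := by
    intro a ha
    revert ha
    revert a
    decide

private lemma conjpow (g x : Equiv.Perm (Fin 5)) (n : ℕ) :
    (g * x * g⁻¹) ^ n = g * x ^ n * g⁻¹ := by
  induction n with
  | zero => simp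
  | succ n ih => rw [pow_succ, pow_succ, ih]; group

private lemma card_K4 : Nat.card K4 = 4 := by
  have h : Nat.card K4 = ({1, t5, u5, t5 * u5} : Finset (Equiv.Perm (Fin 5))).card := by
    rw [← Set.ncard_coe_finset, ← Nat.card_coe_set_eq]
    rfl
  rw [h]
  decide

/-- The closure of `{s5, t5}` in the ambient symmetric group. -/
private def Hm : Subgroup (Equiv.Perm (Fin 5)) := Subgroup.closure {s5, t5}

private lemma s5_mem_Hm : s5 ∈ Hm := Subgroup.subset_closure (by simp)
private lemma t5_mem_Hm : t5 ∈ Hm := Subgroup.subset_closure (by simp)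

private lemma u5_mem_Hm : u5 ∈ Hm := by
  have h : u5 = s5 * s5 * t5 * s5 * s5 * s5 * t5 * s5 * s5 := by decide
  rw [h]
  exact mul_mem (mul_mem (mul_mem (mul_mem (mul_mem (mul_mem (mul_mem (mul_mem
    s5_mem_Hm s5_mem_Hm) t5_mem_Hm) s5_mem_Hm) s5_mem_Hm) s5_mem_Hm) t5_mem_Hm)
    s5_mem_Hm) s5_mem_Hm

private lemma K4_le_Hm : K4 ≤ Hm := by
  intro x hx
  have hx' : x ∈ ({1, t5, u5, t5 * u5} : Finset (Equiv.Perm (Fin 5))) := hx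
  simp only [Finset.mem_insert, Finset.mem_singleton] at hx'
  rcases hx' with rfl | rfl | rfl | rfl
  · exact one_mem _
  · exact t5_mem_Hm
  · exact u5_mem_Hm
  · exact mul_mem t5_mem_Hm u5_mem_Hm

private lemma Hm_le_A : Hm ≤ alternatingGroup (Fin 5) := by
  rw [Hm, Subgroup.closure_le]
  rintro x (rfl | rfl)
  · exact hs5A
  · exact ht5A

private lemma card_A : Nat.card (alternatingGroup (Fin 5)) = 60 := by
  have h := two_mul_card_alternatingGroup (α := Fin 5)
  have h2 : Fintype.card (Equiv.Perm (Fin 5)) = 120 := by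
    rw [Fintype.card_perm, Fintype.card_fin]
    decide
  rw [Nat.card_eq_fintype_card]
  omega

private lemma card_Hm : Nat.card Hm = 60 := by
  have h4 : (4 : ℕ) ∣ Nat.card Hm := card_K4 ▸ Subgroup.card_dvd_of_le K4_le_Hm
  have h5 : (5 : ℕ) ∣ Nat.card Hm := by
    haveI : Fact (Nat.Prime 5) := ⟨by norm_num⟩
    have ho : orderOf (⟨s5, s5_mem_Hm⟩ : Hm) = 5 := by
      apply orderOf_eq_prime
      · exact Subtype.ext (by decide : s5 ^ 5 = 1)
      · exact fun h => (by decide : s5 ≠ 1) (congrArg Subtype.val h)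
    have hd := orderOf_dvd_natCard (⟨s5, s5_mem_Hm⟩ : Hm)
    rwa [ho] at hd
  have h3 : (3 : ℕ) ∣ Nat.card Hm := by
    haveI : Fact (Nat.Prime 3) := ⟨by norm_num⟩
    have ho : orderOf (⟨s5 * t5, mul_mem s5_mem_Hm t5_mem_Hm⟩ : Hm) = 3 := by
      apply orderOf_eq_prime
      · exact Subtype.ext (by decide : (s5 * t5) ^ 3 = 1)
      · exact fun h => (by decide : s5 * t5 ≠ 1) (congrArg Subtype.val h)
    have hd := orderOf_dvd_natCard (⟨s5 * t5, mul_mem s5_mem_Hm t5_mem_Hm⟩ : Hm)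
    rwa [ho] at hd
  have h60 : (60 : ℕ) ∣ Nat.card Hm := by
    have h20 : (20 : ℕ) ∣ Nat.card Hm :=
      (Nat.Coprime.mul_dvd_of_dvd_of_dvd (by norm_num) h4 h5)
    exact Nat.Coprime.mul_dvd_of_dvd_of_dvd (by norm_num) h3 h20
  have hdvd : Nat.card Hm ∣ 60 := card_A ▸ Subgroup.card_dvd_of_le Hm_le_A
  exact Nat.dvd_antisymm hdvd h60

private lemma Hm_eq_A : Hm = alternatingGroup (Fin 5) := by
  apply SetLike.coe_injective
  refine Set.eq_of_subset_of_ncard_le Hm_le_A ?_ (Set.toFinite _)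
  have h1 : (Hm : Set (Equiv.Perm (Fin 5))).ncard = 60 := by
    rw [← Nat.card_coe_set_eq]; exact card_Hm
  have h2 : ((alternatingGroup (Fin 5) : Subgroup (Equiv.Perm (Fin 5))) :
      Set (Equiv.Perm (Fin 5))).ncard = 60 := by
    rw [← Nat.card_coe_set_eq]; exact card_A
  omega

private def sA : alternatingGroup (Fin 5) := ⟨s5, hs5A⟩
private def tA : alternatingGroup (Fin 5) := ⟨t5, ht5A⟩

private lemma closure_sA_tA : Subgroup.closure {sA, tA} = ⊤ := by
  apply Subgroup.map_injective (alternatingGroup (Fin 5)).subtype_injective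
  rw [MonoidHom.map_closure, ← MonoidHom.range_eq_map, Subgroup.range_subtype]
  have himg : (alternatingGroup (Fin 5)).subtype '' {sA, tA} = {s5, t5} := by
    simp [Set.image_insert_eq, sA, tA]
  rw [himg, ← Hm]
  exact Hm_eq_A

/-- Two automorphisms of `A₅` agreeing on `sA` and `tA` are equal. -/
private lemma aut_ext {φ ψ : MulAut (alternatingGroup (Fin 5))}
    (h1 : φ sA = ψ sA) (h2 : φ tA = ψ tA) : φ = ψ := by
  have h : Set.EqOn φ.toMonoidHom ψ.toMonoidHom ({sA, tA} : Set (alternatingGroup (Fin 5))) := by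
    rintro x (rfl | rfl) <;> assumption
  have h' := MonoidHom.eqOn_closure h
  rw [closure_sA_tA] at h'
  exact MulEquiv.ext fun x =>
    h' (by trivial : x ∈ ((⊤ : Subgroup (alternatingGroup (Fin 5))) : Set _))

private def X5 : Finset (Equiv.Perm (Fin 5)) := Finset.univ.filter fun x => x ^ 5 = 1 ∧ x ≠ 1
private def Y5 : Finset (Equiv.Perm (Fin 5)) := Finset.univ.filter fun y => y ^ 2 = 1 ∧ y ≠ 1
private def pairs : Finset (Equiv.Perm (Fin 5) × Equiv.Perm (Fin 5)) :=
  (X5 ×ˢ Y5).filter fun p => (p.1 * p.2) ^ 3 = 1 ∧ p.1 * p.2 ≠ 1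

private lemma pairs_card : pairs.card = 120 := by decide

private lemma mem_pairs {x y : Equiv.Perm (Fin 5)} :
    (x, y) ∈ pairs ↔ (x ^ 5 = 1 ∧ x ≠ 1) ∧ (y ^ 2 = 1 ∧ y ≠ 1) ∧
      ((x * y) ^ 3 = 1 ∧ x * y ≠ 1) := by
  simp [pairs, X5, Y5, Finset.mem_filter, Finset.mem_product, and_assoc]

private lemma centralizer_st : ∀ g : Equiv.Perm (Fin 5),
    g * s5 = s5 * g → g * t5 = t5 * g → g = 1 := by decide

/-- The conjugation map into `pairs`. -/
private def F (g : Equiv.Perm (Fin 5)) : {p // p ∈ pairs} :=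
  ⟨(g * s5 * g⁻¹, g * t5 * g⁻¹), by
    rw [mem_pairs]
    refine ⟨⟨?_, ?_⟩, ⟨?_, ?_⟩, ?_, ?_⟩
    · rw [conjpow, (by decide : s5 ^ 5 = 1), mul_one, mul_inv_cancel]
    · intro h
      exact (by decide : s5 ≠ 1) (by
        have := congrArg (fun x => g⁻¹ * x * g) h
        simpa [mul_assoc] using this)
    · rw [conjpow, (by decide : t5 ^ 2 = 1), mul_one, mul_inv_cancel]
    · intro h
      exact (by decide : t5 ≠ 1) (by
        have := congrArg (fun x => g⁻¹ * x * g) h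
        simpa [mul_assoc] using this)
    · have h1 : g * s5 * g⁻¹ * (g * t5 * g⁻¹) = g * (s5 * t5) * g⁻¹ := by group
      rw [h1, conjpow, (by decide : (s5 * t5) ^ 3 = 1), mul_one, mul_inv_cancel]
    · have h1 : g * s5 * g⁻¹ * (g * t5 * g⁻¹) = g * (s5 * t5) * g⁻¹ := by group
      rw [h1]
      intro h
      exact (by decide : s5 * t5 ≠ 1) (by
        have := congrArg (fun x => g⁻¹ * x * g) h
        simpa [mul_assoc] using this)⟩

private lemma F_injective : Function.Injective F := by
  intro g1 g2 h
  have h' := congrArg Subtype.val h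
  have hs : g1 * s5 * g1⁻¹ = g2 * s5 * g2⁻¹ := congrArg Prod.fst h'
  have ht : g1 * t5 * g1⁻¹ = g2 * t5 * g2⁻¹ := congrArg Prod.snd h'
  have key : g2⁻¹ * g1 = 1 := by
    apply centralizer_st
    · have := congrArg (fun x => g2⁻¹ * x * g1) hs
      simpa [mul_assoc] using this
    · have := congrArg (fun x => g2⁻¹ * x * g1) ht
      simpa [mul_assoc] using this
  have : g1 = g2 * 1 := by rw [← key]; group
  simpa using this

private lemma F_surjective : Function.Surjective F := by
  have h1 : Fintype.card {p // p ∈ pairs} = 120 := by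
    rw [Fintype.card_coe, pairs_card]
  have h2 : Fintype.card (Equiv.Perm (Fin 5)) = 120 := by
    rw [Fintype.card_perm, Fintype.card_fin]
    decide
  exact ((Fintype.bijective_iff_injective_and_card F).2
    ⟨F_injective, by rw [h1, h2]⟩).2

private lemma conjNormal_injective :
    Function.Injective (MulAut.conjNormal :
      Equiv.Perm (Fin 5) →* MulAut (alternatingGroup (Fin 5))) := by
  intro g1 g2 h
  apply F_injective
  apply Subtype.ext
  have hs := congrArg (fun ψ : MulAut (alternatingGroup (Fin 5)) => (ψ sA : Equiv.Perm (Fin 5))) h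
  have ht := congrArg (fun ψ : MulAut (alternatingGroup (Fin 5)) => (ψ tA : Equiv.Perm (Fin 5))) h
  simp only [MulAut.conjNormal_apply] at hs ht
  exact Prod.ext hs ht

private lemma conjNormal_surjective :
    Function.Surjective (MulAut.conjNormal :
      Equiv.Perm (Fin 5) →* MulAut (alternatingGroup (Fin 5))) := by
  intro φ
  have hmem : ((φ sA : Equiv.Perm (Fin 5)), (φ tA : Equiv.Perm (Fin 5))) ∈ pairs := by
    rw [mem_pairs]
    have hs1 : sA ^ 5 = 1 := Subtype.ext (by decide : s5 ^ 5 = 1)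
    have ht1 : tA ^ 2 = 1 := Subtype.ext (by decide : t5 ^ 2 = 1)
    have hst1 : (sA * tA) ^ 3 = 1 := Subtype.ext (by decide : (s5 * t5) ^ 3 = 1)
    refine ⟨⟨?_, ?_⟩, ⟨?_, ?_⟩, ?_, ?_⟩
    · rw [← Subgroup.coe_pow, ← map_pow, hs1, map_one, OneMemClass.coe_one]
    · intro h
      have : φ sA = 1 := Subtype.ext (by simpa using h)
      have : sA = 1 := by simpa using φ.injective (by simpa using this)
      exact (by decide : s5 ≠ 1) (congrArg Subtype.val this)
    · rw [← Subgroup.coe_pow, ← map_pow, ht1, map_one, OneMemClass.coe_one]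
    · intro h
      have : φ tA = 1 := Subtype.ext (by simpa using h)
      have : tA = 1 := by simpa using φ.injective (by simpa using this)
      exact (by decide : t5 ≠ 1) (congrArg Subtype.val this)
    · rw [← Subgroup.coe_mul, ← map_mul, ← Subgroup.coe_pow, ← map_pow, hst1, map_one,
        OneMemClass.coe_one]
    · rw [← Subgroup.coe_mul, ← map_mul]
      intro h
      have : φ (sA * tA) = 1 := Subtype.ext (by simpa using h)
      have : sA * tA = 1 := by simpa using φ.injective (by simpa using this)
      exact (by decide : s5 * t5 ≠ 1) (congrArg Subtype.val this)
  obtain ⟨g, hg⟩ := F_surjective ⟨_, hmem⟩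
  have hg' := congrArg Subtype.val hg
  have hgs : g * s5 * g⁻¹ = (φ sA : Equiv.Perm (Fin 5)) := congrArg Prod.fst hg'
  have hgt : g * t5 * g⁻¹ = (φ tA : Equiv.Perm (Fin 5)) := congrArg Prod.snd hg'
  refine ⟨g, aut_ext ?_ ?_⟩
  · exact Subtype.ext (by rw [MulAut.conjNormal_apply]; exact hgs)
  · exact Subtype.ext (by rw [MulAut.conjNormal_apply]; exact hgt)

/-- The automorphism group of the alternating group `A₅` is isomorphic to the
symmetric group `S₅`. -/
theorem aut_alternating_five_iso_perm_five :
    Nonempty (MulAut (alternatingGroup (Fin 5)) ≃* Equiv.Perm (Fin 5)) := by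
  exact ⟨(MulEquiv.ofBijective
    (MulAut.conjNormal : Equiv.Perm (Fin 5) →* MulAut (alternatingGroup (Fin 5)))
    ⟨conjNormal_injective, conjNormal_surjective⟩).symm⟩
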